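/- arXiv:1912.04460 — 6 statements merged into one kernel-verified Lean document; each statement's English description precedes it below -/
import Mathlib

section
/- Let S = ⟨a, ah+d, ..., ah+kd⟩ be an extra-generalized arithmetical numerical semigroup with d > 0. Then the Frobenius number of S equals ⌈(a−1)/k⌉·ah + (a−1)d − a. -/
/-- Generators of an extra-generalized arithmetical numerical semigroup:
`a` together with `a*h + i*d` for `1 ≤ i ≤ k`. -/
def egaGens (a h k d : ℤ) : Set ℤ :=
  insert a {x : ℤ | ∃ i : ℤ, 1 ≤ i ∧ i ≤ k ∧ x = a * h + i * d}

/-- The numerical semigroup generated by those generators. -/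
def egaSg (a h k d : ℤ) : Set ℤ :=
  (AddSubmonoid.closure (egaGens a h k d) : Set ℤ)

/-- Explicit description as an additive submonoid. -/
def egaT (a h k d : ℤ) : AddSubmonoid ℤ where
  carrier := {x : ℤ | ∃ n m t : ℤ, 0 ≤ n ∧ 0 ≤ m ∧ m ≤ t ∧ t ≤ m * k ∧
      x = n * a + m * (a * h) + t * d}
  zero_mem' := ⟨0, 0, 0, le_refl 0, le_refl 0, le_refl 0, by simp, by ring⟩
  add_mem' := by
    rintro x y ⟨n, m, t, hn, hm, hmt, htk, rfl⟩ ⟨n', m', t', hn', hm', hmt', htk', rfl⟩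
    exact ⟨n + n', m + m', t + t', by linarith, by linarith, by linarith,
      by rw [add_mul]; linarith, by ring⟩

lemma mem_egaT {a h k d x : ℤ} :
    x ∈ (egaT a h k d : Set ℤ) ↔ ∃ n m t : ℤ, 0 ≤ n ∧ 0 ≤ m ∧ m ≤ t ∧ t ≤ m * k ∧
      x = n * a + m * (a * h) + t * d := Iff.rfl

lemma mem_closure_aux (a h k d : ℤ) (hk : 1 ≤ k) :
    ∀ m : ℕ, ∀ t : ℤ, (m : ℤ) ≤ t → t ≤ (m : ℤ) * k →
      (m : ℤ) * (a * h) + t * d ∈ AddSubmonoid.closure (egaGens a h k d) := by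
  intro m
  induction m with
  | zero =>
    intro t h1 h2
    have ht : t = 0 := le_antisymm (by simpa using h2) (by simpa using h1)
    subst ht
    simpa using (AddSubmonoid.closure (egaGens a h k d)).zero_mem
  | succ m ih =>
    intro t h1 h2
    set i := min k (t - (m : ℤ)) with hi
    have hi1 : 1 ≤ i := le_min hk (by push_cast at h1 ⊢; linarith)
    have hi2 : i ≤ k := min_le_left _ _
    have hit : i ≤ t - (m : ℤ) := min_le_right _ _
    have h1' : (m : ℤ) ≤ t - i := by linarith
    have h2' : t - i ≤ (m : ℤ) * k := by
      rcases le_total k (t - (m : ℤ)) with hc | hc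
      · have : i = k := min_eq_left hc
        rw [this]; push_cast at h2; linarith
      · have : i = t - (m : ℤ) := min_eq_right hc
        rw [this]
        have hm0 : (0 : ℤ) ≤ (m : ℤ) := Int.natCast_nonneg m
        nlinarith
    have hmem := ih (t - i) h1' h2'
    have hg : a * h + i * d ∈ egaGens a h k d := Or.inr ⟨i, hi1, hi2, rfl⟩
    have := add_mem (AddSubmonoid.subset_closure hg) hmem
    convert this using 1
    push_cast
    ring

lemma egaSg_eq (a h k d : ℤ) (hk : 1 ≤ k) :
    egaSg a h k d = (egaT a h k d : Set ℤ) := by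
  apply Set.Subset.antisymm
  · refine AddSubmonoid.closure_le.mpr ?_
    rintro x (rfl | ⟨i, hi1, hi2, rfl⟩)
    · exact ⟨1, 0, 0, by norm_num, le_refl 0, le_refl 0, by simp, by ring⟩
    · exact ⟨0, 1, i, le_refl 0, by norm_num, hi1, by linarith, by ring⟩
  · rintro x ⟨n, m, t, hn, hm, hmt, htk, rfl⟩
    have hna : n * a ∈ AddSubmonoid.closure (egaGens a h k d) := by
      have := nsmul_mem (AddSubmonoid.subset_closure
        (Set.mem_insert a _ : a ∈ egaGens a h k d)) n.toNat
      rwa [nsmul_eq_mul, Int.toNat_of_nonneg hn] at this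
    have hmm : (m.toNat : ℤ) = m := Int.toNat_of_nonneg hm
    have hrest : m * (a * h) + t * d ∈ AddSubmonoid.closure (egaGens a h k d) := by
      have := mem_closure_aux a h k d hk m.toNat t (by rw [hmm]; exact hmt)
        (by rw [hmm]; exact htk)
      rwa [hmm] at this
    have := add_mem hna hrest
    rwa [← add_assoc] at this

/-- The Frobenius number of `S` is the greatest integer not in `S`. -/
theorem stmt_4 (a h k d : ℤ) (ha : 1 ≤ a) (hh : 1 ≤ h) (hk : 1 ≤ k)
    (hka : k < a) (hgcd : Int.gcd a d = 1) (hmin : a < a * h + k * d)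
    (hd : 0 < d) :
    IsGreatest {n : ℤ | n ∉ egaSg a h k d}
      (⌈((a : ℚ) - 1) / (k : ℚ)⌉ * (a * h) + (a - 1) * d - a) := by
  have ha0 : (0 : ℤ) < a := by linarith
  have hk0 : (0 : ℤ) < k := by linarith
  have hkQ : (0 : ℚ) < (k : ℚ) := by exact_mod_cast hk0
  -- ceiling bounds
  have hc1 : a - 1 ≤ k * ⌈((a : ℚ) - 1) / (k : ℚ)⌉ := by
    have h1 := Int.le_ceil (((a : ℚ) - 1) / (k : ℚ))
    have h2 := (div_le_iff₀ hkQ).mp h1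
    have h3 : ((a : ℚ) - 1) ≤ (k : ℚ) * ((⌈((a : ℚ) - 1) / (k : ℚ)⌉ : ℤ) : ℚ) := by
      linarith
    exact_mod_cast h3
  have hc2 : k * (⌈((a : ℚ) - 1) / (k : ℚ)⌉ - 1) < a - 1 := by
    have h1 := Int.ceil_lt_add_one (((a : ℚ) - 1) / (k : ℚ))
    have h2 : (((⌈((a : ℚ) - 1) / (k : ℚ)⌉ : ℤ) : ℚ) - 1) * (k : ℚ) < (a : ℚ) - 1 := by
      rw [← lt_div_iff₀ hkQ]; linarith
    have h3 : (k : ℚ) * (((⌈((a : ℚ) - 1) / (k : ℚ)⌉ : ℤ) : ℚ) - 1) < (a : ℚ) - 1 := by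
      linarith
    exact_mod_cast h3
  set c : ℤ := ⌈((a : ℚ) - 1) / (k : ℚ)⌉ with hc
  clear_value c
  rw [egaSg_eq a h k d hk]
  constructor
  · -- F ∉ T
    rintro ⟨n, m, t, hn, hm, hmt, htk, heq⟩
    have hdvd : a ∣ (t - (a - 1)) * d :=
      ⟨(c - m) * h - 1 - n, by linear_combination -heq⟩
    have hcop : IsCoprime a d := Int.isCoprime_iff_gcd_eq_one.mpr hgcd
    obtain ⟨s, hs⟩ := hcop.dvd_of_dvd_mul_right hdvd
    have ht0 : 0 ≤ t := le_trans hm hmt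
    have hs0 : 0 ≤ s := by
      have hlt : a * (-1) < a * s := by nlinarith
      have := lt_of_mul_lt_mul_left hlt (le_of_lt ha0)
      linarith
    have hkey : a * (s * d) = a * ((c - m) * h - 1 - n) := by
      linear_combination (-d) * hs - heq
    have hkey2 : s * d = (c - m) * h - 1 - n :=
      mul_left_cancel₀ (ne_of_gt ha0) hkey
    have hcm : 1 ≤ c - m := by nlinarith
    -- t ≥ a - 1 and t ≤ m*k ≤ (c-1)*k < a-1
    have hta : a - 1 ≤ t := by nlinarith
    nlinarith
  · -- upper bound
    intro x hx
    by_contra hlt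
    push_neg at hlt
    apply hx
    -- x > F, show x ∈ T
    set u := Int.gcdA a d with hu
    set v := Int.gcdB a d with hv
    have hbez : (1 : ℤ) = a * u + d * v := by
      have := Int.gcd_eq_gcd_ab a d
      rw [hgcd] at this
      exact_mod_cast this
    set j : ℤ := (x * v) % a with hj
    have hj0 : 0 ≤ j := Int.emod_nonneg _ (ne_of_gt ha0)
    have hj1 : j < a := Int.emod_lt_of_pos _ ha0
    have hdvd : a ∣ x - j * d := by
      refine ⟨x * u + ((x * v) / a) * d, ?_⟩
      rw [hj, Int.emod_def]
      linear_combination x * hbez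
    set m : ℤ := (j + k - 1) / k with hmdef
    have hdm : j + k - 1 = k * m + (j + k - 1) % k := (Int.mul_ediv_add_emod _ _).symm
    have hr0 : 0 ≤ (j + k - 1) % k := Int.emod_nonneg _ (ne_of_gt hk0)
    have hr1 : (j + k - 1) % k < k := Int.emod_lt_of_pos _ hk0
    have hm1 : j ≤ k * m := by linarith
    have hm2 : k * m ≤ j + k - 1 := by linarith
    have hm0 : 0 ≤ m := Int.ediv_nonneg (by linarith) (le_of_lt hk0)
    clear_value u v j m
    have hmj : m ≤ j := by
      have hjk : j ≤ k * j := le_mul_of_one_le_left hj0 hk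
      have hx1 : k * m < k * (j + 1) := by rw [mul_add, mul_one]; linarith
      have := lt_of_mul_lt_mul_left hx1 (le_of_lt hk0)
      linarith
    have hmc : m ≤ c := by
      have hx1 : k * m < k * (c + 1) := by rw [mul_add, mul_one]; linarith
      have := lt_of_mul_lt_mul_left hx1 (le_of_lt hk0)
      linarith
    obtain ⟨w, hw⟩ := hdvd
    -- x - (m*(a*h) + j*d) = a * (w - m*h)
    have e1 : 0 ≤ (c - m) * (a * h) :=
      mul_nonneg (by linarith) (by positivity)
    have e2 : 0 ≤ (a - 1 - j) * d := mul_nonneg (by linarith) (le_of_lt hd)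
    have hwub : a * (-1) < a * (w - m * h) := by nlinarith [e1, e2, hw, hlt]
    have hw0 : 0 ≤ w - m * h := by
      have := lt_of_mul_lt_mul_left hwub (le_of_lt ha0)
      linarith
    have hjmk : j ≤ m * k := by rw [mul_comm]; exact hm1
    have hxeq : x = (w - m * h) * a + m * (a * h) + j * d := by linear_combination hw
    exact mem_egaT.mpr ⟨w - m * h, m, j, hw0, hm0, hmj, hjmk, hxeq⟩
end

section
/- Let T = ⟨α⟩ + βS be a monoscopic gluing of S = ⟨m, n_2, ..., n_k⟩ with α ∉ Ap(S;m). For a, a' ∈ Ap(S;m) and 0 ≤ b, b' ≤ β−1, one has (b'α + a'β) − (bα + aβ) ∈ T if and only if a' − a ∈ S and b ≤ b'. -/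
/-- The Apéry set `Ap(S; m) = {n ∈ S : n - m ∉ S}`. -/
def apSet (S : Set ℤ) (m : ℤ) : Set ℤ := {n | n ∈ S ∧ n - m ∉ S}

theorem stmt_8 (G : Finset ℤ) (m : ℤ) (hm : m ∈ G) (hpos : ∀ g ∈ G, 0 < g)
    (S : Set ℤ) (hS : S = (AddSubmonoid.closure (G : Set ℤ) : Set ℤ))
    (hcof : {n : ℤ | 0 ≤ n ∧ n ∉ S}.Finite)
    (β : ℤ) (hβ : 2 ≤ β) (α : ℤ) (hα : α ∈ S) (hαgen : α ∉ G)
    (hgcd : Int.gcd α β = 1)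
    (T : Set ℤ)
    (hT : T = (AddSubmonoid.closure (insert α ((fun g => β * g) '' (G : Set ℤ))) : Set ℤ))
    (hαap : α ∉ apSet S m)
    (x x' b b' : ℤ) (hx : x ∈ apSet S m) (hx' : x' ∈ apSet S m)
    (hb0 : 0 ≤ b) (hb1 : b ≤ β - 1) (hb0' : 0 ≤ b') (hb1' : b' ≤ β - 1) :
    (b' * α + x' * β) - (b * α + x * β) ∈ T ↔ (x' - x ∈ S ∧ b ≤ b') := by
  -- T membership characterization
  have hβ0 : (0:ℤ) < β := by linarith
  have hmul : AddSubmonoid.closure ((fun g => β * g) '' (G : Set ℤ))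
      = (AddSubmonoid.closure (G : Set ℤ)).map (AddMonoidHom.mulLeft β) := by
    rw [AddMonoidHom.map_mclosure]
    rfl
  have hTmem : ∀ d : ℤ, d ∈ T ↔ ∃ c : ℕ, ∃ s ∈ S, d = c * α + β * s := by
    intro d
    rw [hT]
    constructor
    · intro hd
      rw [Set.insert_eq, AddSubmonoid.closure_union, SetLike.mem_coe,
        AddSubmonoid.mem_sup] at hd
      obtain ⟨y, hy, z, hz, hyz⟩ := hd
      rw [AddSubmonoid.mem_closure_singleton] at hy
      obtain ⟨n, hn⟩ := hy
      rw [hmul, AddSubmonoid.mem_map] at hz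
      obtain ⟨s, hs, hsz⟩ := hz
      refine ⟨n, s, by rw [hS]; exact hs, ?_⟩
      simp only [AddMonoidHom.coe_mulLeft] at hsz
      rw [← hyz, ← hn, ← hsz]
      push_cast [nsmul_eq_mul]
      ring
    · rintro ⟨c, s, hs, rfl⟩
      rw [hS] at hs
      have h1 : α ∈ AddSubmonoid.closure (insert α ((fun g => β * g) '' (G : Set ℤ))) :=
        AddSubmonoid.subset_closure (Set.mem_insert _ _)
      have h2 : β * s ∈ AddSubmonoid.closure (insert α ((fun g => β * g) '' (G : Set ℤ))) := by
        have : β * s ∈ AddSubmonoid.closure ((fun g => β * g) '' (G : Set ℤ)) := by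
          rw [hmul, AddSubmonoid.mem_map]
          exact ⟨s, hs, rfl⟩
        exact AddSubmonoid.closure_mono (Set.subset_insert _ _) this
      have h3 : (c : ℤ) * α ∈ AddSubmonoid.closure (insert α ((fun g => β * g) '' (G : Set ℤ))) := by
        have := nsmul_mem h1 c
        rwa [nsmul_eq_mul] at this
      exact AddSubmonoid.add_mem _ h3 h2
  -- S is an additive submonoid
  have hSadd : ∀ u v : ℤ, u ∈ S → v ∈ S → u + v ∈ S := by
    intro u v hu hv; rw [hS] at hu hv ⊢
    exact AddSubmonoid.add_mem _ hu hv
  have hSn : ∀ (n : ℕ) (u : ℤ), u ∈ S → (n : ℤ) * u ∈ S := by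
    intro n u hu; rw [hS] at hu ⊢
    have := nsmul_mem hu n
    rwa [nsmul_eq_mul] at this
  have hαm : α - m ∈ S := by
    by_contra h
    exact hαap ⟨hα, h⟩
  constructor
  · intro hd
    rw [hTmem] at hd
    obtain ⟨c, s, hs, heq⟩ := hd
    -- β ∣ b' - b - c
    have hdvd : β ∣ (b' - b - c) * α := ⟨s - (x' - x), by linarith⟩
    have hcop : IsCoprime β α := (Int.isCoprime_iff_gcd_eq_one.mpr hgcd).symm
    obtain ⟨q, hq⟩ := hcop.dvd_of_dvd_mul_right hdvd
    have hsx : x' - x = s - q * α := by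
      have : β * (s - (x' - x)) = β * (q * α) := by linarith [hq ▸ (by ring : β * q * α = β * (q * α))]
      have := mul_left_cancel₀ (ne_of_gt hβ0) this
      linarith
    rcases lt_trichotomy q 0 with hq0 | hq0 | hq0
    · -- q < 0 : contradiction with x' ∈ Ap
      exfalso
      apply hx'.2
      have hn : ((-q - 1).toNat : ℤ) = -q - 1 := Int.toNat_of_nonneg (by linarith)
      have : x' - m = x + (s + (((-q-1).toNat : ℤ) * α + (α - m))) := by
        rw [hn]; linarith
      rw [this]
      exact hSadd _ _ hx.1 (hSadd _ _ hs (hSadd _ _ (hSn _ _ hα) hαm))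
    · subst hq0
      constructor
      · have : x' - x = s := by rw [hsx]; ring
        rw [this]; exact hs
      · have : b' - b - c = 0 := by simpa using hq
        have := Int.natCast_nonneg c
        omega
    · -- q > 0 : b' - b - c = β q ≥ β, impossible
      exfalso
      have : β * q ≥ β := le_mul_of_one_le_right (le_of_lt hβ0) (by omega)
      have := Int.natCast_nonneg c
      omega
  · rintro ⟨hxs, hbb⟩
    rw [hTmem]
    refine ⟨(b' - b).toNat, x' - x, hxs, ?_⟩
    rw [Int.toNat_of_nonneg (by omega)]
    ring
end

section
/- Let T = ⟨α⟩ + βS be a monoscopic gluing of S = ⟨m, n_2, ..., n_k⟩ with α ∈ Ap(S;m). For a, a' ∈ Ap(S;m) and 0 ≤ b, b' ≤ β−1, one has (b'α + a'β) − (bα + aβ) ∈ T if and only if a' − a ∈ S and either b ≤ b' or a' − a − α ∈ S. -/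
lemma AddSubmonoid.int_mul_mem {S : AddSubmonoid ℤ} {n a : ℤ} (hn : 0 ≤ n) (ha : a ∈ S) :
    n * a ∈ S := by
  lift n to ℕ using hn
  simpa only [nsmul_eq_mul] using nsmul_mem ha n

lemma mem_closure_insert_image_mul_iff {G : Set ℤ} {α β d : ℤ} :
    d ∈ AddSubmonoid.closure (insert α ((fun g => β * g) '' G)) ↔
      ∃ c : ℤ, 0 ≤ c ∧ ∃ s ∈ AddSubmonoid.closure G, c * α + β * s = d := by
  rw [Set.insert_eq, AddSubmonoid.closure_union, AddSubmonoid.mem_sup,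
    show (fun g => β * g) = ⇑(AddMonoidHom.mulLeft β) from rfl, ← AddMonoidHom.map_mclosure]
  constructor
  · rintro ⟨_, hc, _, ⟨s, hs, rfl⟩, rfl⟩
    obtain ⟨c, rfl⟩ := AddSubmonoid.mem_closure_singleton.mp hc
    exact ⟨c, c.cast_nonneg, s, hs, by simp⟩
  · rintro ⟨c, hc, s, hs, rfl⟩
    lift c to ℕ using hc
    exact ⟨_, AddSubmonoid.mem_closure_singleton.mpr ⟨c, nsmul_eq_mul c α⟩,
      _, AddSubmonoid.mem_map_of_mem _ hs, rfl⟩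

lemma mem_and_of_mul_add_mul_mem_closure {G : Set ℤ} {α β e y : ℤ} (hβ : 0 < β)
    (hcop : IsCoprime β α) (hα : α ∈ AddSubmonoid.closure G) (he : e < β)
    (hmem : e * α + β * y ∈ AddSubmonoid.closure (insert α ((fun g => β * g) '' G))) :
    y ∈ AddSubmonoid.closure G ∧ (0 ≤ e ∨ y - α ∈ AddSubmonoid.closure G) := by
  obtain ⟨c, hc, s, hs, hcs⟩ := mem_closure_insert_image_mul_iff.mp hmem
  obtain ⟨t, ht⟩ : β ∣ e - c :=
    hcop.dvd_of_dvd_mul_right ⟨s - y, by linear_combination -hcs⟩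
  have hy : y = s - t * α :=
    mul_left_cancel₀ hβ.ne' (by linear_combination -hcs - α * ht)
  have ht_nonpos : t ≤ 0 := by
    by_contra! h
    nlinarith
  rcases ht_nonpos.eq_or_lt with rfl | ht_neg
  · exact ⟨by simpa [hy] using hs, Or.inl (by linarith)⟩
  · have hy_sub : y - α = s + (-t - 1) * α := by rw [hy]; ring
    have hy_sub_mem : y - α ∈ AddSubmonoid.closure G :=
      hy_sub ▸ add_mem hs (AddSubmonoid.int_mul_mem (by omega) hα)
    exact ⟨by simpa using add_mem hy_sub_mem hα, Or.inr hy_sub_mem⟩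

lemma mul_add_mul_mem_closure_iff {G : Set ℤ} {α β e y : ℤ} (hβ : 0 < β)
    (hcop : IsCoprime β α) (hα : α ∈ AddSubmonoid.closure G) (he : e < β) (he' : -β < e) :
    e * α + β * y ∈ AddSubmonoid.closure (insert α ((fun g => β * g) '' G)) ↔
      y ∈ AddSubmonoid.closure G ∧ (0 ≤ e ∨ y - α ∈ AddSubmonoid.closure G) := by
  refine ⟨mem_and_of_mul_add_mul_mem_closure hβ hcop hα he, ?_⟩
  rintro ⟨hy, he_nonneg | hy_sub⟩
  · exact mem_closure_insert_image_mul_iff.mpr ⟨e, he_nonneg, y, hy, rfl⟩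
  · exact mem_closure_insert_image_mul_iff.mpr ⟨e + β, by omega, y - α, hy_sub, by ring⟩

theorem stmt_9_general (G : Finset ℤ)
    (S : Set ℤ) (hS : S = (AddSubmonoid.closure (G : Set ℤ) : Set ℤ))
    (β : ℤ) (hβ : 2 ≤ β) (α : ℤ) (hα : α ∈ S)
    (hgcd : Int.gcd α β = 1)
    (T : Set ℤ)
    (hT : T = (AddSubmonoid.closure (insert α ((fun g => β * g) '' (G : Set ℤ))) : Set ℤ))
    (x x' b b' : ℤ)
    (hb0 : 0 ≤ b) (hb1 : b ≤ β - 1) (hb0' : 0 ≤ b') (hb1' : b' ≤ β - 1) :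
    (b' * α + x' * β) - (b * α + x * β) ∈ T ↔ (x' - x ∈ S ∧ (b ≤ b' ∨ x' - x - α ∈ S)) := by
  subst hS hT
  simp only [SetLike.mem_coe]
  have hcop : IsCoprime β α := (Int.isCoprime_iff_gcd_eq_one.mpr hgcd).symm
  rw [show (b' * α + x' * β) - (b * α + x * β) = (b' - b) * α + β * (x' - x) by ring,
    mul_add_mul_mem_closure_iff (by omega) hcop hα (by omega) (by omega), sub_nonneg]

theorem stmt_9 (G : Finset ℤ) (m : ℤ) (hm : m ∈ G) (hpos : ∀ g ∈ G, 0 < g)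
    (S : Set ℤ) (hS : S = (AddSubmonoid.closure (G : Set ℤ) : Set ℤ))
    (hcof : {n : ℤ | 0 ≤ n ∧ n ∉ S}.Finite)
    (β : ℤ) (hβ : 2 ≤ β) (α : ℤ) (hα : α ∈ S) (hαgen : α ∉ G)
    (hgcd : Int.gcd α β = 1)
    (T : Set ℤ)
    (hT : T = (AddSubmonoid.closure (insert α ((fun g => β * g) '' (G : Set ℤ))) : Set ℤ))
    (hαap : α ∈ apSet S m)
    (x x' b b' : ℤ) (hx : x ∈ apSet S m) (hx' : x' ∈ apSet S m)
    (hb0 : 0 ≤ b) (hb1 : b ≤ β - 1) (hb0' : 0 ≤ b') (hb1' : b' ≤ β - 1) :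
    (b' * α + x' * β) - (b * α + x * β) ∈ T ↔ (x' - x ∈ S ∧ (b ≤ b' ∨ x' - x - α ∈ S)) :=
  stmt_9_general G S hS β hβ α hα hgcd T hT x x' b b' hb0 hb1 hb0' hb1'
end

section
/- Let m ≥ 2 and let (a_1, ..., a_{m−1}) be a tuple of positive integers with a_i ≡ i (mod m) for each i, satisfying a_i + a_j ≥ a_{(i+j) mod m} for all 1 ≤ i, j ≤ m−1 with i + j ≢ 0 (mod m). Then S = {km + a_i : k ≥ 0, 0 ≤ i ≤ m−1}, where a_0 = 0, is a numerical semigroup containing m with Ap(S;m) = {0, a_1, ..., a_{m−1}}. -/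
/-- `S` is a numerical semigroup: a cofinite subset of the nonnegative
integers containing `0` and closed under addition. -/
def IsNumericalSemigroup (S : Set ℤ) : Prop :=
  (0 : ℤ) ∈ S ∧ (∀ x ∈ S, ∀ y ∈ S, x + y ∈ S) ∧ (∀ x ∈ S, 0 ≤ x) ∧
    {n : ℤ | 0 ≤ n ∧ n ∉ S}.Finite

theorem stmt_11 (m : ℤ) (hm2 : 2 ≤ m) (a : ℤ → ℤ) (ha0 : a 0 = 0)
    (hpos : ∀ i : ℤ, 1 ≤ i → i ≤ m - 1 → 0 < a i)
    (hres : ∀ i : ℤ, 1 ≤ i → i ≤ m - 1 → a i % m = i % m)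
    (hineq : ∀ i j : ℤ, 1 ≤ i → i ≤ m - 1 → 1 ≤ j → j ≤ m - 1 →
      (i + j) % m ≠ 0 → a ((i + j) % m) ≤ a i + a j)
    (S : Set ℤ)
    (hS : S = {n : ℤ | ∃ c i : ℤ, 0 ≤ c ∧ 0 ≤ i ∧ i ≤ m - 1 ∧ n = c * m + a i}) :
    IsNumericalSemigroup S ∧ m ∈ S ∧
      apSet S m = {x : ℤ | ∃ i : ℤ, 0 ≤ i ∧ i ≤ m - 1 ∧ x = a i} := by
  have hm : (0:ℤ) < m := by linarith
  have ha_nonneg : ∀ i : ℤ, 0 ≤ i → i ≤ m - 1 → 0 ≤ a i := by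
    intro i h1 h2
    rcases h1.eq_or_lt with h | h
    · simp [← h, ha0]
    · exact (hpos i h h2).le
  have ha_mod : ∀ i : ℤ, 0 ≤ i → i ≤ m - 1 → a i % m = i := by
    intro i h1 h2
    rcases h1.eq_or_lt with h | h
    · simp [← h, ha0]
    · rw [hres i h h2]; exact Int.emod_eq_of_lt h1 (by linarith)
  -- membership characterization
  have hmem : ∀ n : ℤ, n ∈ S ↔ 0 ≤ n ∧ a (n % m) ≤ n := by
    intro n
    rw [hS]; constructor
    · rintro ⟨c, i, hc, hi1, hi2, rfl⟩
      have hx := ha_nonneg i hi1 hi2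
      have hmm : (c * m + a i) % m = i := by
        rw [add_comm, Int.add_mul_emod_self_right, ha_mod i hi1 hi2]
      constructor
      · nlinarith
      · rw [hmm]; nlinarith
    · rintro ⟨h0, hle⟩
      set i := n % m with hi
      have hi1 : 0 ≤ i := Int.emod_nonneg n hm.ne'
      have hi2 : i ≤ m - 1 := by have := Int.emod_lt_of_pos n hm; omega
      have hdvd : m ∣ n - a i := by
        apply Int.dvd_of_emod_eq_zero
        rw [Int.sub_emod, ha_mod i hi1 hi2, ← hi, sub_self, Int.zero_emod]
      exact ⟨(n - a i) / m, i, Int.ediv_nonneg (by linarith) hm.le, hi1, hi2,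
        by rw [Int.ediv_mul_cancel hdvd]; ring⟩
  -- key addition lemma
  have hadd : ∀ i j : ℤ, 0 ≤ i → i ≤ m - 1 → 0 ≤ j → j ≤ m - 1 →
      ∃ e : ℤ, 0 ≤ e ∧ a i + a j = e * m + a ((i + j) % m) := by
    intro i j hi1 hi2 hj1 hj2
    set k := (i + j) % m with hk
    have hk1 : 0 ≤ k := Int.emod_nonneg _ hm.ne'
    have hk2 : k ≤ m - 1 := by have := Int.emod_lt_of_pos (i + j) hm; omega
    have h1 : (a i + a j) % m = k := by
      rw [Int.add_emod, ha_mod i hi1 hi2, ha_mod j hj1 hj2]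
    have hdvd : m ∣ a i + a j - a k := by
      apply Int.dvd_of_emod_eq_zero
      rw [Int.sub_emod, h1, ha_mod k hk1 hk2, sub_self, Int.zero_emod]
    have hnn : 0 ≤ a i + a j - a k := by
      rcases hi1.eq_or_lt with h | hi1'
      · have hkj : k = j := by
          rw [hk, ← h, zero_add]; exact Int.emod_eq_of_lt hj1 (by linarith)
        rw [hkj, ← h, ha0]; linarith
      rcases hj1.eq_or_lt with h | hj1'
      · have hki : k = i := by
          rw [hk, ← h, add_zero]; exact Int.emod_eq_of_lt hi1 (by linarith)
        rw [hki, ← h, ha0]; linarith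
      rcases eq_or_ne k 0 with h | h
      · rw [h, ha0]
        have := hpos i hi1' hi2; have := hpos j hj1' hj2; linarith
      · have hne : (i + j) % m ≠ 0 := by rw [← hk]; exact h
        have := hineq i j hi1' hi2 hj1' hj2 hne
        rw [← hk] at this; linarith
    exact ⟨(a i + a j - a k) / m, Int.ediv_nonneg hnn hm.le,
      by rw [Int.ediv_mul_cancel hdvd]; ring⟩
  refine ⟨⟨?_, ?_, ?_, ?_⟩, ?_, ?_⟩
  · -- 0 ∈ S
    rw [hmem]
    refine ⟨le_refl 0, ?_⟩
    rw [Int.zero_emod, ha0]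
  · -- closed under addition
    intro x hx y hy
    rw [hS] at hx hy ⊢
    obtain ⟨c, i, hc, hi1, hi2, rfl⟩ := hx
    obtain ⟨d, j, hd, hj1, hj2, rfl⟩ := hy
    obtain ⟨e, he, heq⟩ := hadd i j hi1 hi2 hj1 hj2
    have hk1 : 0 ≤ (i + j) % m := Int.emod_nonneg _ hm.ne'
    have hk2 : (i + j) % m ≤ m - 1 := by have := Int.emod_lt_of_pos (i + j) hm; omega
    exact ⟨c + d + e, (i + j) % m, by linarith, hk1, hk2, by linarith [heq]⟩
  · -- nonneg
    intro x hx
    exact ((hmem x).1 hx).1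
  · -- cofinite
    have hne : (Finset.Icc (0:ℤ) (m - 1)).Nonempty := by
      rw [Finset.nonempty_Icc]; linarith
    apply Set.Finite.subset (Set.finite_Ico 0 ((Finset.Icc (0:ℤ) (m - 1)).sup' hne a))
    rintro n ⟨hn0, hnS⟩
    have h2 : n < a (n % m) := by
      by_contra h
      push_neg at h
      exact hnS ((hmem n).2 ⟨hn0, h⟩)
    have hle : a (n % m) ≤ (Finset.Icc (0:ℤ) (m - 1)).sup' hne a := by
      apply Finset.le_sup'
      rw [Finset.mem_Icc]
      have := Int.emod_lt_of_pos n hm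
      exact ⟨Int.emod_nonneg n hm.ne', by omega⟩
    exact ⟨hn0, lt_of_lt_of_le h2 hle⟩
  · -- m ∈ S
    rw [hS]
    exact ⟨1, 0, by norm_num, le_refl 0, by linarith, by rw [ha0]; ring⟩
  · -- Apery set
    ext x
    simp only [apSet, Set.mem_setOf_eq]
    constructor
    · rintro ⟨hxS, hxmS⟩
      rw [hS] at hxS
      obtain ⟨c, i, hc, hi1, hi2, rfl⟩ := hxS
      rcases hc.eq_or_lt with h | h
      · exact ⟨i, hi1, hi2, by rw [← h]; ring⟩
      · exfalso
        apply hxmS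
        rw [hS]
        exact ⟨c - 1, i, by linarith, hi1, hi2, by ring⟩
    · rintro ⟨i, hi1, hi2, rfl⟩
      constructor
      · rw [hS]; exact ⟨0, i, le_refl 0, hi1, hi2, by ring⟩
      · intro hcon
        rw [hmem] at hcon
        obtain ⟨h0, hle⟩ := hcon
        have : (a i - m) % m = i := by
          rw [Int.sub_emod, Int.emod_self, sub_zero, Int.emod_emod_of_dvd _ dvd_rfl, ha_mod i hi1 hi2]
        rw [this] at hle
        linarith
end

section
/- Let T = ⟨α⟩ + βS be a monoscopic gluing of S = ⟨m, n_2, ..., n_k⟩, with a, a' ∈ Ap(S;m) and 0 ≤ b, b' ≤ β−1. Then b'α + a'β covers bα + aβ in the divisibility order on Ap(T; βm) if and only if one of the following holds: (i) a = a' and b' − b = 1; (ii) b = b' and a' − a = n_j for some j ≥ 2; or (iii) b = β−1, b' = 0, and a' − a = α. Moreover case (iii) occurs for some pair if and only if α ∈ Ap(S;m). -/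
/-- `y` covers `x` in the divisibility order on the set `Ap`
(`x ⪯ y` iff `y - x ∈ Ap`). -/
def apCovers (Ap : Set ℤ) (x y : ℤ) : Prop :=
  x ∈ Ap ∧ y ∈ Ap ∧ (y - x ∈ Ap ∧ x ≠ y) ∧
    ¬∃ z ∈ Ap, (z - x ∈ Ap ∧ x ≠ z) ∧ (y - z ∈ Ap ∧ z ≠ y)

/-!
In the Apéry poset of a submonoid of `ℤ`, `y` covers `x` exactly when `y - x` is an atom
(a nonzero element that is not a sum of two nonzero elements): a nontrivial splitting of `y - x`
yields an intermediate element, since summands of Apéry elements are again Apéry elements.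

Every element of `T = ⟨α⟩ + βS` is `cα + βs` with `c ≥ 0`, `s ∈ S`. Since `gcd(α, β) = 1`,
the atoms of `T` are `α` and the `βg` with `g` a minimal generator of `S`, and an element
`bα + aβ` with `0 ≤ b < β` determines `b` and `a`. Hence a difference `βg` forces `b = b'`, and
a difference `α` forces `b' = b + 1`, unless `b = β - 1`, where the carry `βα = αβ` gives
`b' = 0` and `a' = a + α`.
-/

def IsAtomIn {M : Type*} [AddZeroClass M] (S : Set M) (d : M) : Prop :=
  d ∈ S ∧ d ≠ 0 ∧ ∀ u ∈ S, ∀ v ∈ S, d = u + v → u = 0 ∨ v = 0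

section Closure

variable {M : Type*} [AddMonoid M] {X : Set M}

theorem eq_zero_or_exists_add_of_mem_closure {s : M} (hs : s ∈ AddSubmonoid.closure X) :
    s = 0 ∨ ∃ x ∈ X, x ≠ 0 ∧ ∃ s' ∈ AddSubmonoid.closure X, s = x + s' := by
  induction hs using AddSubmonoid.closure_induction with
  | mem x hx =>
    by_cases hx0 : x = 0
    · exact Or.inl hx0
    · exact Or.inr ⟨x, hx, hx0, 0, zero_mem _, (add_zero x).symm⟩
  | zero => exact Or.inl rfl
  | add s t _ ht ihs iht =>
    rcases ihs with rfl | ⟨x, hx, hx0, s', hs', rfl⟩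
    · simpa only [zero_add] using iht
    · exact Or.inr ⟨x, hx, hx0, s' + t, add_mem hs' ht, add_assoc x s' t⟩

theorem IsAtomIn.mem_of_closure {d : M} (h : IsAtomIn (AddSubmonoid.closure X : Set M) d) :
    d ∈ X := by
  obtain ⟨hd, hd0, hatom⟩ := h
  rcases eq_zero_or_exists_add_of_mem_closure hd with h0 | ⟨x, hx, hx0, s, hs, rfl⟩
  · exact absurd h0 hd0
  · rcases hatom x (AddSubmonoid.subset_closure hx) s hs rfl with h | h
    · exact absurd h hx0
    · rwa [h, add_zero]

end Closure

section Apery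

variable {M : AddSubmonoid ℤ} {n : ℤ}

theorem mem_apSet_of_add_mem_apSet {u v : ℤ} (hu : u ∈ M) (hv : v ∈ M)
    (h : u + v ∈ apSet M n) : u ∈ apSet M n :=
  ⟨hu, fun hun => h.2 (by rw [show u + v - n = (u - n) + v by ring]; exact add_mem hun hv)⟩

theorem apCovers_iff_isAtomIn {x y : ℤ} (hx : x ∈ apSet M n) (hy : y ∈ apSet M n) :
    apCovers (apSet M n) x y ↔ IsAtomIn (M : Set ℤ) (y - x) := by
  constructor
  · rintro ⟨-, -, ⟨hyx, hxy⟩, hno⟩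
    refine ⟨hyx.1, sub_ne_zero.2 hxy.symm, fun u hu v hv huv => ?_⟩
    by_contra! huv0
    have hxu : x + u ∈ M := add_mem hx.1 hu
    have hz : x + u ∈ apSet M n :=
      mem_apSet_of_add_mem_apSet hxu hv (by rwa [show x + u + v = y by linarith])
    refine hno ⟨x + u, hz, ⟨?_, fun h => huv0.1 (by linarith)⟩, ⟨?_, fun h => huv0.2 (by linarith)⟩⟩
    · rw [add_sub_cancel_left]
      exact mem_apSet_of_add_mem_apSet hu hx.1 (by rwa [add_comm])
    · rw [show y - (x + u) = v by linarith]
      exact mem_apSet_of_add_mem_apSet hv hxu (by rwa [show v + (x + u) = y by linarith])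
  · rintro ⟨hd, hd0, hatom⟩
    refine ⟨hx, hy, ⟨mem_apSet_of_add_mem_apSet hd hx.1 (by rwa [sub_add_cancel]),
      fun h => hd0 (by rw [h, sub_self])⟩, ?_⟩
    rintro ⟨z, -, ⟨hzx, hxz⟩, hyz, hzy⟩
    rcases hatom (z - x) hzx.1 (y - z) hyz.1 (by ring) with h | h
    · exact hxz (by linarith)
    · exact hzy (by linarith)

end Apery

section Nonneg

variable {G : Set ℤ}

theorem nonneg_of_mem_closure (hG : ∀ g ∈ G, 0 ≤ g) {s : ℤ}
    (hs : s ∈ AddSubmonoid.closure G) : 0 ≤ s := by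
  induction hs using AddSubmonoid.closure_induction with
  | mem g hg => exact hG g hg
  | zero => exact le_rfl
  | add _ _ _ _ h₁ h₂ => exact add_nonneg h₁ h₂

theorem zero_mem_apSet_closure (hG : ∀ g ∈ G, 0 ≤ g) {m : ℤ} (hm : 0 < m) :
    (0 : ℤ) ∈ apSet (AddSubmonoid.closure G) m :=
  ⟨zero_mem _, fun h => by have := nonneg_of_mem_closure hG h; omega⟩

theorem mem_closure_diff_singleton_of_lt (hG : ∀ g ∈ G, 0 ≤ g) {g s : ℤ}
    (hs : s ∈ AddSubmonoid.closure G) (hsg : s < g) :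
    s ∈ AddSubmonoid.closure (G \ {g}) := by
  induction hs using AddSubmonoid.closure_induction with
  | mem x hx => exact AddSubmonoid.subset_closure ⟨hx, hsg.ne⟩
  | zero => exact zero_mem _
  | add s t hs ht ihs iht =>
    have := nonneg_of_mem_closure hG hs
    have := nonneg_of_mem_closure hG ht
    exact add_mem (ihs (by linarith)) (iht (by linarith))

theorem isAtomIn_closure_of_not_mem_closure_diff (hG : ∀ g ∈ G, 0 ≤ g) {g : ℤ} (hg : g ∈ G)
    (hmin : g ∉ AddSubmonoid.closure (G \ {g})) :
    IsAtomIn (AddSubmonoid.closure G : Set ℤ) g := by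
  refine ⟨AddSubmonoid.subset_closure hg, fun h => hmin (h ▸ zero_mem _),
    fun u hu v hv huv => ?_⟩
  by_contra! h
  have hu0 := nonneg_of_mem_closure hG hu
  have hv0 := nonneg_of_mem_closure hG hv
  have hu' := mem_closure_diff_singleton_of_lt (g := g) hG hu (by omega)
  have hv' := mem_closure_diff_singleton_of_lt (g := g) hG hv (by omega)
  exact hmin (by simpa only [← huv] using add_mem hu' hv')

end Nonneg

theorem eq_and_eq_of_mul_add_mul_eq {α β b b' x x' : ℤ} (hco : IsCoprime β α)
    (hb : 0 ≤ b) (hbβ : b < β) (hb' : 0 ≤ b') (hb'β : b' < β)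
    (h : b * α + x * β = b' * α + x' * β) : b = b' ∧ x = x' := by
  have hdvd : β ∣ b - b' := hco.dvd_of_dvd_mul_right ⟨x' - x, by linear_combination h⟩
  have hbb : b = b' := by
    have := Int.eq_zero_of_abs_lt_dvd hdvd (abs_lt.2 ⟨by linarith, by linarith⟩)
    linarith
  subst hbb
  exact ⟨rfl, mul_right_cancel₀ (by linarith : β ≠ 0) (by linarith)⟩

theorem mul_add_mul_sub_eq_self_iff {α β b b' x x' : ℤ} (hco : IsCoprime β α)
    (hb : 0 ≤ b) (hbβ : b < β) (hb' : 0 ≤ b') (hb'β : b' < β) :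
    b' * α + x' * β - (b * α + x * β) = α ↔
      (x = x' ∧ b' - b = 1) ∨ (b = β - 1 ∧ b' = 0 ∧ x' - x = α) := by
  constructor
  · intro h
    rcases lt_or_eq_of_le (show b + 1 ≤ β by omega) with hlt | heq
    · obtain ⟨h₁, h₂⟩ := eq_and_eq_of_mul_add_mul_eq hco (by omega) hlt hb' hb'β
        (show (b + 1) * α + x * β = b' * α + x' * β by linarith)
      exact Or.inl ⟨h₂, by omega⟩
    · obtain ⟨h₁, h₂⟩ := eq_and_eq_of_mul_add_mul_eq hco le_rfl (by omega) hb' hb'β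
        (show 0 * α + (x + α) * β = b' * α + x' * β by
          linear_combination -h - α * heq)
      exact Or.inr ⟨by omega, h₁.symm, by omega⟩
  · rintro (⟨rfl, h⟩ | ⟨rfl, rfl, h⟩)
    · linear_combination α * h
    · linear_combination β * h

theorem mul_add_mul_sub_eq_mul_iff {α β b b' x x' g : ℤ} (hco : IsCoprime β α)
    (hb : 0 ≤ b) (hbβ : b < β) (hb' : 0 ≤ b') (hb'β : b' < β) :
    b' * α + x' * β - (b * α + x * β) = β * g ↔ b = b' ∧ x' - x = g := by
  constructor
  · intro h
    obtain ⟨h₁, h₂⟩ := eq_and_eq_of_mul_add_mul_eq hco hb hbβ hb' hb'β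
      (show b * α + (x + g) * β = b' * α + x' * β by linear_combination -h)
    exact ⟨h₁, by omega⟩
  · rintro ⟨rfl, rfl⟩
    ring

def monoscopicGluing (G : Set ℤ) (α β : ℤ) : AddSubmonoid ℤ :=
  AddSubmonoid.closure (insert α ((fun g => β * g) '' G))

section MonoscopicGluing

variable {G : Set ℤ} {α β : ℤ}

theorem mem_monoscopicGluing_iff {t : ℤ} :
    t ∈ monoscopicGluing G α β ↔
      ∃ c s, 0 ≤ c ∧ s ∈ AddSubmonoid.closure G ∧ t = c * α + β * s := by
  constructor
  · intro ht
    induction ht using AddSubmonoid.closure_induction with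
    | mem x hx =>
      rcases hx with rfl | ⟨g, hg, rfl⟩
      · exact ⟨1, 0, zero_le_one, zero_mem _, by ring⟩
      · exact ⟨0, g, le_rfl, AddSubmonoid.subset_closure hg, by ring⟩
    | zero => exact ⟨0, 0, le_rfl, zero_mem _, by ring⟩
    | add _ _ _ _ h₁ h₂ =>
      obtain ⟨c₁, s₁, hc₁, hs₁, rfl⟩ := h₁
      obtain ⟨c₂, s₂, hc₂, hs₂, rfl⟩ := h₂
      exact ⟨c₁ + c₂, s₁ + s₂, add_nonneg hc₁ hc₂, add_mem hs₁ hs₂, by ring⟩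
  · rintro ⟨c, s, hc, hs, rfl⟩
    have hα : α ∈ monoscopicGluing G α β := AddSubmonoid.subset_closure (Set.mem_insert _ _)
    have hβs : β * s ∈ monoscopicGluing G α β := by
      induction hs using AddSubmonoid.closure_induction with
      | mem g hg => exact AddSubmonoid.subset_closure (Set.mem_insert_of_mem _ ⟨g, hg, rfl⟩)
      | zero => rw [mul_zero]; exact zero_mem _
      | add _ _ _ _ h₁ h₂ => rw [mul_add]; exact add_mem h₁ h₂
    lift c to ℕ using hc
    simpa using add_mem (nsmul_mem hα c) hβs

theorem isAtomIn_monoscopicGluing_self (hG : ∀ g ∈ G, 0 ≤ g) (hα : 0 < α) (hβ : 1 < β)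
    (hco : IsCoprime β α) : IsAtomIn (monoscopicGluing G α β : Set ℤ) α := by
  refine ⟨AddSubmonoid.subset_closure (Set.mem_insert _ _), hα.ne', fun u hu v hv huv => ?_⟩
  obtain ⟨c₁, s₁, hc₁, hs₁, rfl⟩ := mem_monoscopicGluing_iff.1 hu
  obtain ⟨c₂, s₂, hc₂, hs₂, rfl⟩ := mem_monoscopicGluing_iff.1 hv
  have hs₁0 := nonneg_of_mem_closure hG hs₁
  have hs₂0 := nonneg_of_mem_closure hG hs₂
  have hc : c₁ + c₂ ≤ 1 := by nlinarith
  obtain ⟨hc1, hs0⟩ := eq_and_eq_of_mul_add_mul_eq hco zero_le_one hβ (by omega) (by omega)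
    (show 1 * α + 0 * β = (c₁ + c₂) * α + (s₁ + s₂) * β by linear_combination huv)
  rcases (show c₁ = 0 ∨ c₂ = 0 by omega) with h | h
  · exact Or.inl (by rw [h, show s₁ = 0 by omega]; ring)
  · exact Or.inr (by rw [h, show s₂ = 0 by omega]; ring)

theorem isAtomIn_monoscopicGluing_mul (hα : α ∈ AddSubmonoid.closure G) (hα0 : 0 < α)
    (hβ : 0 < β) (hco : IsCoprime β α) {g : ℤ}
    (hg : IsAtomIn (AddSubmonoid.closure G : Set ℤ) g) (hgα : g ≠ α) :
    IsAtomIn (monoscopicGluing G α β : Set ℤ) (β * g) := by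
  refine ⟨mem_monoscopicGluing_iff.2 ⟨0, g, le_rfl, hg.1, by ring⟩,
    mul_ne_zero hβ.ne' hg.2.1, fun u hu v hv huv => ?_⟩
  obtain ⟨c₁, s₁, hc₁, hs₁, rfl⟩ := mem_monoscopicGluing_iff.1 hu
  obtain ⟨c₂, s₂, hc₂, hs₂, rfl⟩ := mem_monoscopicGluing_iff.1 hv
  obtain ⟨k, hk⟩ : β ∣ c₁ + c₂ :=
    hco.dvd_of_dvd_mul_right ⟨g - s₁ - s₂, by linear_combination -huv⟩
  have hk0 : 0 ≤ k := by nlinarith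
  have hgk : g = k * α + (s₁ + s₂) :=
    mul_left_cancel₀ hβ.ne' (by linear_combination huv + α * hk)
  rcases (show k = 0 ∨ 1 ≤ k by omega) with rfl | hk1
  · rcases hg.2.2 s₁ hs₁ s₂ hs₂ (by rw [hgk]; ring) with h | h
    · exact Or.inl (by rw [h, show c₁ = 0 by omega]; ring)
    · exact Or.inr (by rw [h, show c₂ = 0 by omega]; ring)
  · exfalso
    have hrest : (k - 1) * α + (s₁ + s₂) ∈ AddSubmonoid.closure G := by
      lift k - 1 to ℕ using (by omega) with j
      exact add_mem (by simpa using nsmul_mem hα j) (add_mem hs₁ hs₂)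
    rcases hg.2.2 α hα _ hrest (by rw [hgk]; ring) with h | h
    · exact hα0.ne' h
    · exact hgα (by linarith)

theorem isAtomIn_monoscopicGluing_iff (hG : ∀ g ∈ G, 0 ≤ g)
    (hGmin : ∀ g ∈ G, g ∉ AddSubmonoid.closure (G \ {g})) (hα : α ∈ AddSubmonoid.closure G)
    (hαG : α ∉ G) (hα0 : 0 < α) (hβ : 1 < β) (hco : IsCoprime β α) {d : ℤ} :
    IsAtomIn (monoscopicGluing G α β : Set ℤ) d ↔ d = α ∨ ∃ g ∈ G, d = β * g := by
  constructor
  · intro hd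
    rcases hd.mem_of_closure with rfl | ⟨g, hg, rfl⟩
    · exact Or.inl rfl
    · exact Or.inr ⟨g, hg, rfl⟩
  · rintro (rfl | ⟨g, hg, rfl⟩)
    · exact isAtomIn_monoscopicGluing_self hG hα0 hβ hco
    · exact isAtomIn_monoscopicGluing_mul hα hα0 (by omega) hco
        (isAtomIn_closure_of_not_mem_closure_diff hG hg (hGmin g hg)) (fun h => hαG (h ▸ hg))

theorem mul_add_mul_mem_apSet_monoscopicGluing (hα : α ∈ AddSubmonoid.closure G)
    (hco : IsCoprime β α) {m a b : ℤ} (hb : 0 ≤ b) (hbβ : b < β)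
    (ha : a ∈ apSet (AddSubmonoid.closure G) m) :
    b * α + a * β ∈ apSet (monoscopicGluing G α β) (β * m) := by
  refine ⟨mem_monoscopicGluing_iff.2 ⟨b, a, hb, ha.1, by ring⟩, fun h => ha.2 ?_⟩
  obtain ⟨c, s, hc, hs, heq⟩ := mem_monoscopicGluing_iff.1 h
  obtain ⟨k, hk⟩ : β ∣ b - c := hco.dvd_of_dvd_mul_right ⟨s - a + m, by linear_combination heq⟩
  have hk0 : k ≤ 0 := by nlinarith
  have hka : k * α = s - a + m :=
    mul_left_cancel₀ (show β ≠ 0 by omega) (by linear_combination heq - α * hk)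
  lift -k to ℕ using (by omega) with j hj
  rw [show a - m = s + (-k) * α by linear_combination hka, ← hj]
  exact add_mem hs (by simpa using nsmul_mem hα j)

theorem apCovers_monoscopicGluing_iff (hG : ∀ g ∈ G, 0 ≤ g)
    (hGmin : ∀ g ∈ G, g ∉ AddSubmonoid.closure (G \ {g})) (hα : α ∈ AddSubmonoid.closure G)
    (hαG : α ∉ G) (hβ : 1 < β) (hco : IsCoprime β α) {m x x' b b' : ℤ}
    (hx : x ∈ apSet (AddSubmonoid.closure G) m) (hx' : x' ∈ apSet (AddSubmonoid.closure G) m)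
    (hb : 0 ≤ b) (hbβ : b < β) (hb' : 0 ≤ b') (hb'β : b' < β) :
    apCovers (apSet (monoscopicGluing G α β) (β * m)) (b * α + x * β) (b' * α + x' * β) ↔
      (x = x' ∧ b' - b = 1) ∨ (b = b' ∧ (x' - x ∈ G ∧ x' - x ≠ m)) ∨
        (b = β - 1 ∧ b' = 0 ∧ x' - x = α) := by
  have hα0 : 0 < α := by
    refine lt_of_le_of_ne (nonneg_of_mem_closure hG hα) ?_
    rintro rfl
    have := Int.isUnit_iff.1 (isCoprime_zero_right.1 hco)
    omega
  rw [apCovers_iff_isAtomIn (mul_add_mul_mem_apSet_monoscopicGluing hα hco hb hbβ hx)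
    (mul_add_mul_mem_apSet_monoscopicGluing hα hco hb' hb'β hx'),
    isAtomIn_monoscopicGluing_iff hG hGmin hα hαG hα0 hβ hco,
    mul_add_mul_sub_eq_self_iff hco hb hbβ hb' hb'β]
  constructor
  · rintro ((h | h) | ⟨g, hg, hd⟩)
    · exact Or.inl h
    · exact Or.inr (Or.inr h)
    · obtain ⟨rfl, hxg⟩ := (mul_add_mul_sub_eq_mul_iff hco hb hbβ hb' hb'β).1 hd
      refine Or.inr (Or.inl ⟨rfl, hxg ▸ hg, fun hm => hx'.2 ?_⟩)
      rw [show x' - m = x by omega]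
      exact hx.1
  · rintro (h | ⟨rfl, hg, -⟩ | h)
    · exact Or.inl (Or.inl h)
    · exact Or.inr ⟨_, hg, (mul_add_mul_sub_eq_mul_iff hco hb hbβ hb' hb'β).2 ⟨rfl, rfl⟩⟩
    · exact Or.inl (Or.inr h)

end MonoscopicGluing

theorem stmt_15_general (G : Finset ℤ) (m : ℤ) (hm : m ∈ G) (hpos : ∀ g ∈ G, 0 < g)
    (S : Set ℤ) (hS : S = (AddSubmonoid.closure (G : Set ℤ) : Set ℤ))
    (hGmin : ∀ g ∈ G, g ∉ (AddSubmonoid.closure ((G : Set ℤ) \ {g}) : Set ℤ))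
    (β : ℤ) (hβ : 2 ≤ β) (α : ℤ) (hα : α ∈ S) (hαgen : α ∉ G)
    (hgcd : Int.gcd α β = 1)
    (T : Set ℤ)
    (hT : T = (AddSubmonoid.closure (insert α ((fun g => β * g) '' (G : Set ℤ))) : Set ℤ)) :
    (∀ x x' b b' : ℤ, x ∈ apSet S m → x' ∈ apSet S m →
      0 ≤ b → b ≤ β - 1 → 0 ≤ b' → b' ≤ β - 1 →
      (apCovers (apSet T (β * m)) (b * α + x * β) (b' * α + x' * β) ↔
        ((x = x' ∧ b' - b = 1) ∨
         (b = b' ∧ (x' - x ∈ G ∧ x' - x ≠ m)) ∨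
         (b = β - 1 ∧ b' = 0 ∧ x' - x = α)))) ∧
    ((∃ x x' : ℤ, x ∈ apSet S m ∧ x' ∈ apSet S m ∧ x' - x = α ∧
        apCovers (apSet T (β * m)) ((β - 1) * α + x * β) (x' * β)) ↔
      α ∈ apSet S m) := by
  have hT' : T = monoscopicGluing G α β := hT
  subst hS hT'
  have hco : IsCoprime β α := (Int.isCoprime_iff_gcd_eq_one.2 hgcd).symm
  have hG : ∀ g ∈ (G : Set ℤ), 0 ≤ g := fun g hg => (hpos g hg).le
  have hcovers {x x' b b' : ℤ} (hx : x ∈ apSet _ m) (hx' : x' ∈ apSet _ m) (hb : 0 ≤ b)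
      (hbβ : b ≤ β - 1) (hb' : 0 ≤ b') (hb'β : b' ≤ β - 1) :=
    apCovers_monoscopicGluing_iff hG hGmin hα hαgen (by omega) hco hx hx'
      hb (by omega) hb' (by omega)
  refine ⟨fun x x' b b' => hcovers, ⟨?_, fun hαAp => ?_⟩⟩
  · rintro ⟨x, x', hx, hx', hxα, -⟩
    rw [sub_eq_iff_eq_add'] at hxα
    subst hxα
    exact mem_apSet_of_add_mem_apSet hα hx.1 (by rwa [add_comm])
  · have h0 := zero_mem_apSet_closure hG (hpos m hm)
    refine ⟨0, α, h0, hαAp, sub_zero α, ?_⟩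
    simpa using (hcovers h0 hαAp (by omega) le_rfl le_rfl (by omega)).2
      (Or.inr (Or.inr ⟨rfl, rfl, sub_zero α⟩))

theorem stmt_15 (G : Finset ℤ) (m : ℤ) (hm : m ∈ G) (hpos : ∀ g ∈ G, 0 < g)
    (S : Set ℤ) (hS : S = (AddSubmonoid.closure (G : Set ℤ) : Set ℤ))
    (hcof : {n : ℤ | 0 ≤ n ∧ n ∉ S}.Finite)
    (hGmin : ∀ g ∈ G, g ∉ (AddSubmonoid.closure ((G : Set ℤ) \ {g}) : Set ℤ))
    (β : ℤ) (hβ : 2 ≤ β) (α : ℤ) (hα : α ∈ S) (hαgen : α ∉ G)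
    (hgcd : Int.gcd α β = 1)
    (T : Set ℤ)
    (hT : T = (AddSubmonoid.closure (insert α ((fun g => β * g) '' (G : Set ℤ))) : Set ℤ)) :
    (∀ x x' b b' : ℤ, x ∈ apSet S m → x' ∈ apSet S m →
      0 ≤ b → b ≤ β - 1 → 0 ≤ b' → b' ≤ β - 1 →
      (apCovers (apSet T (β * m)) (b * α + x * β) (b' * α + x' * β) ↔
        ((x = x' ∧ b' - b = 1) ∨
         (b = b' ∧ (x' - x ∈ G ∧ x' - x ≠ m)) ∨
         (b = β - 1 ∧ b' = 0 ∧ x' - x = α)))) ∧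
    ((∃ x x' : ℤ, x ∈ apSet S m ∧ x' ∈ apSet S m ∧ x' - x = α ∧
        apCovers (apSet T (β * m)) ((β - 1) * α + x * β) (x' * β)) ↔
      α ∈ apSet S m) :=
  stmt_15_general G m hm hpos S hS hGmin β hβ α hα hαgen hgcd T hT
end

section
/- Let S be a numerical semigroup containing m ≥ 2 with Apéry tuple (a_1, ..., a_{m−1}) (a_i ∈ Ap(S;m), a_i ≡ i mod m). In the Kunz poset of S (on ℤ_m, with ī ⪯ j̄ iff a_{j−i mod m} + a_i = a_j), an element j̄ covers ī if and only if j̄ − ī is an atom of the poset. -/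
/-!
The Apéry tuple is subadditive, `a_{x+y} ≤ a_x + a_y`, since `a_x + a_y ∈ S` lies in the residue
class of `x + y`, of which `a_{x+y}` is the least element in `S`. Hence in a chain
`0̄ ≺ z̄ ≺ j̄ - ī` all these inequalities become equalities, and `z̄ + ī` lies strictly between
`ī` and `j̄`; conversely translating a chain `ī ≺ z̄ ≺ j̄` by `-ī` is pure arithmetic.
-/

section Kunz

variable {G R : Type*} [AddCommGroup G] [AddCommMonoid R]

def KunzLE (A : G → R) (i j : G) : Prop := A (j - i) + A i = A j

def KunzLT (A : G → R) (i j : G) : Prop := KunzLE A i j ∧ i ≠ j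

def KunzCovBy (A : G → R) (i j : G) : Prop := KunzLT A i j ∧ ¬∃ z, KunzLT A i z ∧ KunzLT A z j

variable {A : G → R}

theorem KunzLT.zero_sub (hA0 : A 0 = 0) {i j : G} (h : KunzLT A i j) : KunzLT A 0 (j - i) :=
  ⟨by simp [KunzLE, hA0], fun h' => h.2 (sub_eq_zero.mp h'.symm).symm⟩

theorem kunzLT_sub_right [IsRightCancelAdd R] {i j z : G} (hij : KunzLE A i j)
    (hiz : KunzLE A i z) (hzj : KunzLT A z j) : KunzLT A (z - i) (j - i) := by
  refine ⟨add_right_cancel (b := A i) ?_, fun h => hzj.2 (sub_left_inj.mp h)⟩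
  calc A (j - i - (z - i)) + A (z - i) + A i = A (j - z) + A z := by
        rw [sub_sub_sub_cancel_right, add_assoc, hiz]
    _ = A (j - i) + A i := by rw [hzj.1, hij]

theorem kunzLT_add_right [PartialOrder R] [IsOrderedCancelAddMonoid R]
    (hsub : ∀ x y, A (x + y) ≤ A x + A y) {i j z : G} (hij : KunzLE A i j) (hz : 0 ≠ z)
    (hzj : KunzLT A z (j - i)) : KunzLT A i (z + i) ∧ KunzLT A (z + i) j := by
  have hupper : A (j - i - z) + A (z + i) ≤ A (j - i - z) + (A z + A i) :=
    add_le_add_right (hsub z i) _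
  have hlower : A (j - i - z) + (A z + A i) ≤ A (j - i - z) + A (z + i) :=
    calc A (j - i - z) + (A z + A i) = A j := by rw [← add_assoc, hzj.1, hij]
      _ ≤ A (j - i - z) + A (z + i) := by
        simpa only [← add_assoc, sub_add_cancel] using hsub (j - i - z) (z + i)
  have hsplit := le_antisymm hupper hlower
  refine ⟨⟨?_, fun h => hz (right_eq_add.mp h).symm⟩, ⟨?_, fun h => hzj.2 (eq_sub_of_add_eq h)⟩⟩
  · rw [KunzLE, add_sub_cancel_right, add_left_cancel hsplit]
  · rw [KunzLE, show j - (z + i) = j - i - z by abel, hsplit, ← add_assoc, hzj.1, hij]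

theorem kunzCovBy_iff [PartialOrder R] [IsOrderedCancelAddMonoid R] (hA0 : A 0 = 0)
    (hsub : ∀ x y, A (x + y) ≤ A x + A y) (i j : G) :
    KunzCovBy A i j ↔ KunzLT A i j ∧ KunzCovBy A 0 (j - i) := by
  constructor
  · rintro ⟨hij, hcov⟩
    exact ⟨hij, hij.zero_sub hA0, fun ⟨z, hz, hzj⟩ =>
      hcov ⟨z + i, kunzLT_add_right hsub hij.1 hz.2 hzj⟩⟩
  · rintro ⟨hij, -, hatom⟩
    exact ⟨hij, fun ⟨z, hiz, hzj⟩ =>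
      hatom ⟨z - i, hiz.zero_sub hA0, kunzLT_sub_right hij.1 hiz.1 hzj⟩⟩

end Kunz

theorem apSet_le_of_mem {S : Set ℤ} {m : ℕ} (hm : ∀ x ∈ S, x + m ∈ S) {a s : ℤ}
    (ha : a ∈ apSet S m) (hs : s ∈ S) (hmod : (a : ZMod m) = s) : a ≤ s := by
  have key : ∀ n : ℕ, ∀ s ∈ S, a - s ≠ (n + 1) * m := by
    intro n
    induction n with
    | zero => exact fun s hs h => ha.2 (by rwa [show a - m = s by push_cast at h; linarith])
    | succ n ih => exact fun s hs h => ih (s + m) (hm s hs) (by push_cast at h ⊢; linarith)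
  obtain ⟨t, ht⟩ := (ZMod.intCast_eq_intCast_iff_dvd_sub s a m).mp hmod.symm
  by_contra! hlt
  have ht0 : 0 < t := pos_of_mul_pos_right (ht ▸ sub_pos.mpr hlt) m.cast_nonneg
  obtain ⟨n, rfl⟩ := Int.eq_succ_of_zero_lt ht0
  exact key n s hs (by rw [ht]; ring)

theorem apery_add_le {S : Set ℤ} (hadd : ∀ x ∈ S, ∀ y ∈ S, x + y ∈ S) {m : ℕ} (hm : (m : ℤ) ∈ S)
    {A : ZMod m → ℤ} (hA : ∀ i : ZMod m, A i ∈ apSet S m ∧ (A i : ZMod m) = i) (x y : ZMod m) :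
    A (x + y) ≤ A x + A y :=
  apSet_le_of_mem (fun s hs => hadd s hs m hm) (hA (x + y)).1
    (hadd _ (hA x).1.1 _ (hA y).1.1) (by push_cast; rw [(hA x).2, (hA y).2, (hA (x + y)).2])

theorem stmt_16_general (S : Set ℤ) (hS : IsNumericalSemigroup S)
    (m : ℕ) (hm : (m : ℤ) ∈ S)
    -- the Apéry tuple, indexed by residue classes mod `m`
    (A : ZMod m → ℤ) (hA0 : A 0 = 0)
    (hA : ∀ i : ZMod m, A i ∈ apSet S (m : ℤ) ∧ ((A i : ZMod m) = i)) :
    -- the Kunz poset relation `ī ⪯ j̄  iff  a_{j-i} + a_i = a_j`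
    ∀ i j : ZMod m,
      -- `j` covers `i`
      (((A (j - i) + A i = A j) ∧ i ≠ j) ∧
        ¬∃ z : ZMod m, ((A (z - i) + A i = A z) ∧ i ≠ z) ∧
          ((A (j - z) + A z = A j) ∧ z ≠ j))
      ↔
      -- `i ≺ j` and `j - i` is an atom
      (((A (j - i) + A i = A j) ∧ i ≠ j) ∧
        (((A (j - i) + A 0 = A (j - i)) ∧ (0 : ZMod m) ≠ j - i) ∧
          ¬∃ z : ZMod m, ((A (z - 0) + A 0 = A z) ∧ (0 : ZMod m) ≠ z) ∧
            ((A ((j - i) - z) + A z = A (j - i)) ∧ z ≠ j - i))) := fun i j => by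
  simpa only [KunzCovBy, KunzLT, KunzLE, sub_zero] using
    kunzCovBy_iff hA0 (apery_add_le hS.2.1 hm hA) i j

theorem stmt_16 (S : Set ℤ) (hS : IsNumericalSemigroup S)
    (m : ℕ) (hm2 : 2 ≤ m) (hm : (m : ℤ) ∈ S)
    -- the Apéry tuple, indexed by residue classes mod `m`
    (A : ZMod m → ℤ) (hA0 : A 0 = 0)
    (hA : ∀ i : ZMod m, A i ∈ apSet S (m : ℤ) ∧ ((A i : ZMod m) = i)) :
    -- the Kunz poset relation `ī ⪯ j̄  iff  a_{j-i} + a_i = a_j`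
    ∀ i j : ZMod m,
      -- `j` covers `i`
      (((A (j - i) + A i = A j) ∧ i ≠ j) ∧
        ¬∃ z : ZMod m, ((A (z - i) + A i = A z) ∧ i ≠ z) ∧
          ((A (j - z) + A z = A j) ∧ z ≠ j))
      ↔
      -- `i ≺ j` and `j - i` is an atom
      (((A (j - i) + A i = A j) ∧ i ≠ j) ∧
        (((A (j - i) + A 0 = A (j - i)) ∧ (0 : ZMod m) ≠ j - i) ∧
          ¬∃ z : ZMod m, ((A (z - 0) + A 0 = A z) ∧ (0 : ZMod m) ≠ z) ∧
            ((A ((j - i) - z) + A z = A (j - i)) ∧ z ≠ j - i))) :=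
  stmt_16_general S hS m hm A hA0 hA
end
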